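/- Let ε > 0 and let X₁, …, Xₙ be independent real random variables on a probability space with E[Xᵢ] = 0 for each i, and let K₁, …, Kₙ > 0 be such that for each i, exp(|Xᵢ|/Kᵢ) is integrable and E[exp(|Xᵢ|/Kᵢ) − 1 − |Xᵢ|/Kᵢ] ≤ ε. Set Sₙ = X₁ + ⋯ + Xₙ, B² = ε·(K₁² + ⋯ + Kₙ²), and M = max(K₁, …, Kₙ). Then for every real x with 0 ≤ x ≤ 2B²/M, P(Sₙ ≥ x) ≤ exp(−x²/(4B²)), and for every real x with x ≥ 2B²/M, P(Sₙ ≥ x) ≤ exp(−(x/M − B²/M²)). -/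

import Mathlib

open MeasureTheory ProbabilityTheory Finset

/-!
Chernoff's method. From `eʸ ≤ 1 + y + ψ₁₁(|y|)` and the scaling `ψ₁₁(u a) ≤ u² ψ₁₁(a)` for
`0 ≤ u ≤ 1` (compare the power series termwise), a mean-zero `Xᵢ` with `E ψ₁₁(|Xᵢ|/Kᵢ) ≤ ε` has
`E e^{t Xᵢ} ≤ exp(t² Kᵢ² ε)` whenever `0 ≤ t ≤ 1/Kᵢ`. By independence,
`P(Sₙ ≥ x) ≤ exp(-t x + t² B²)` for `0 ≤ t ≤ 1/M`, and the two regimes take the unconstrained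
optimum `t = x/(2B²)` when it is admissible and the endpoint `t = 1/M` otherwise.
-/

noncomputable def psi₁₁ (u : ℝ) : ℝ := Real.exp u - 1 - u

lemma hasSum_psi₁₁ (b : ℝ) :
    HasSum (fun n : ℕ => b ^ (n + 2) / (n + 2).factorial) (psi₁₁ b) := by
  have h := (hasSum_nat_add_iff' 2).mpr (NormedSpace.expSeries_div_hasSum_exp b)
  simpa [psi₁₁, Finset.sum_range_succ, ← Real.exp_eq_exp_ℝ, sub_sub] using h

lemma psi₁₁_mul_le {u a : ℝ} (hu₀ : 0 ≤ u) (hu₁ : u ≤ 1) (ha : 0 ≤ a) :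
    psi₁₁ (u * a) ≤ u ^ 2 * psi₁₁ a := by
  refine hasSum_le (fun n => ?_) (hasSum_psi₁₁ (u * a)) ((hasSum_psi₁₁ a).mul_left (u ^ 2))
  rw [mul_pow, mul_div_assoc]
  exact mul_le_mul_of_nonneg_right (pow_le_pow_of_le_one hu₀ hu₁ (by omega)) (by positivity)

lemma exp_le_one_add_add_psi₁₁_abs (y : ℝ) : Real.exp y ≤ 1 + y + psi₁₁ |y| := by
  rcases le_total 0 y with hy | hy
  · simp [psi₁₁, abs_of_nonneg hy]
  · have hsinh := Real.sinh_le_self_iff.mpr hy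
    rw [Real.sinh_eq] at hsinh
    rw [psi₁₁, abs_of_nonpos hy]
    linarith

section

variable {Ω : Type*} [MeasurableSpace Ω] {μ : Measure Ω}

lemma integrable_exp_mul_of_integrable_exp_abs_div {X : Ω → ℝ} {K t : ℝ}
    (hX : AEMeasurable X μ) (hK : 0 < K) (hint : Integrable (fun ω => Real.exp (|X ω| / K)) μ)
    (ht : 0 ≤ t) (htK : t * K ≤ 1) :
    Integrable (fun ω => Real.exp (t * X ω)) μ := by
  refine hint.mono' (by fun_prop) (Filter.Eventually.of_forall fun ω => ?_)
  rw [Real.norm_eq_abs, abs_of_pos (Real.exp_pos _), Real.exp_le_exp]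
  calc t * X ω ≤ t * |X ω| := mul_le_mul_of_nonneg_left (le_abs_self _) ht
    _ = (t * K) * (|X ω| / K) := by field_simp
    _ ≤ |X ω| / K := mul_le_of_le_one_left (by positivity) htK

lemma mgf_le_exp_of_integral_psi₁₁_le [IsProbabilityMeasure μ] {X : Ω → ℝ} {K ε t : ℝ}
    (hX : Integrable X μ) (hmean : ∫ ω, X ω ∂μ = 0) (hK : 0 < K)
    (hint : Integrable (fun ω => Real.exp (|X ω| / K)) μ)
    (horlicz : ∫ ω, psi₁₁ (|X ω| / K) ∂μ ≤ ε) (ht : 0 ≤ t) (htK : t * K ≤ 1) :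
    mgf X μ t ≤ Real.exp (t ^ 2 * K ^ 2 * ε) := by
  have hpsi : Integrable (fun ω => psi₁₁ (|X ω| / K)) μ :=
    (hint.sub (integrable_const 1)).sub (hX.abs.div_const K)
  have hpointwise : ∀ ω, Real.exp (t * X ω) ≤ 1 + t * X ω + t ^ 2 * K ^ 2 * psi₁₁ (|X ω| / K) := by
    intro ω
    have habs : |t * X ω| = (t * K) * (|X ω| / K) := by
      rw [abs_mul, abs_of_nonneg ht]; field_simp
    calc Real.exp (t * X ω) ≤ 1 + t * X ω + psi₁₁ |t * X ω| := exp_le_one_add_add_psi₁₁_abs _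
      _ ≤ 1 + t * X ω + (t * K) ^ 2 * psi₁₁ (|X ω| / K) := by
        rw [habs]
        gcongr
        exact psi₁₁_mul_le (by positivity) htK (by positivity)
      _ = 1 + t * X ω + t ^ 2 * K ^ 2 * psi₁₁ (|X ω| / K) := by ring
  have hlin : Integrable (fun ω => 1 + t * X ω) μ := (integrable_const 1).add (hX.const_mul t)
  calc mgf X μ t ≤ ∫ ω, (1 + t * X ω + t ^ 2 * K ^ 2 * psi₁₁ (|X ω| / K)) ∂μ :=
        integral_mono (integrable_exp_mul_of_integrable_exp_abs_div hX.aemeasurable hK hint ht htK)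
          (hlin.add (hpsi.const_mul _)) hpointwise
    _ = 1 + t ^ 2 * K ^ 2 * ∫ ω, psi₁₁ (|X ω| / K) ∂μ := by
        rw [integral_add hlin (hpsi.const_mul _),
          integral_add (integrable_const 1) (hX.const_mul t), integral_const_mul,
          integral_const_mul, hmean]
        simp
    _ ≤ 1 + t ^ 2 * K ^ 2 * ε := by gcongr
    _ ≤ Real.exp (t ^ 2 * K ^ 2 * ε) := by linarith [Real.add_one_le_exp (t ^ 2 * K ^ 2 * ε)]

lemma measureReal_sum_ge_le_exp_mul_prod_mgf [IsProbabilityMeasure μ] {ι : Type*}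
    {X : ι → Ω → ℝ} (hindep : iIndepFun X μ) (hX : ∀ i, AEMeasurable (X i) μ) (s : Finset ι)
    (x : ℝ) {t : ℝ} (ht : 0 ≤ t) (hint : ∀ i ∈ s, Integrable (fun ω => Real.exp (t * X i ω)) μ) :
    μ.real {ω | x ≤ ∑ i ∈ s, X i ω} ≤ Real.exp (-t * x) * ∏ i ∈ s, mgf (X i) μ t := by
  have hmgf : mgf (∑ i ∈ s, X i) μ t = ∏ i ∈ s, mgf (X i) μ t := hindep.mgf_sum₀ hX s
  -- `mgf` takes the junk value `0` exactly when the exponential is not integrable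
  have hsum : Integrable (fun ω => Real.exp (t * (∑ i ∈ s, X i) ω)) μ :=
    mgf_pos_iff.mp (hmgf ▸ prod_pos fun i hi => mgf_pos (hint i hi))
  simpa [Finset.sum_apply, hmgf] using measure_ge_le_exp_mul_mgf x ht hsum

theorem measureReal_sum_ge_le_exp_of_integral_psi₁₁_le [IsProbabilityMeasure μ] {ι : Type*}
    [Fintype ι] {X : ι → Ω → ℝ} {K : ι → ℝ} {ε : ℝ} (hindep : iIndepFun X μ)
    (hX : ∀ i, Integrable (X i) μ) (hmean : ∀ i, ∫ ω, X i ω ∂μ = 0) (hK : ∀ i, 0 < K i)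
    (hint : ∀ i, Integrable (fun ω => Real.exp (|X i ω| / K i)) μ)
    (horlicz : ∀ i, ∫ ω, psi₁₁ (|X i ω| / K i) ∂μ ≤ ε)
    (x : ℝ) {t : ℝ} (ht : 0 ≤ t) (htK : ∀ i, t * K i ≤ 1) :
    μ.real {ω | x ≤ ∑ i, X i ω} ≤ Real.exp (-t * x + t ^ 2 * (ε * ∑ i, K i ^ 2)) := by
  calc μ.real {ω | x ≤ ∑ i, X i ω} ≤ Real.exp (-t * x) * ∏ i, mgf (X i) μ t :=
        measureReal_sum_ge_le_exp_mul_prod_mgf hindep (fun i => (hX i).aemeasurable) _ x ht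
          fun i _ => integrable_exp_mul_of_integrable_exp_abs_div (hX i).aemeasurable (hK i)
            (hint i) ht (htK i)
    _ ≤ Real.exp (-t * x) * ∏ i, Real.exp (t ^ 2 * K i ^ 2 * ε) := by
        gcongr with i
        · exact fun i _ => mgf_nonneg
        · exact mgf_le_exp_of_integral_psi₁₁_le (hX i) (hmean i) (hK i) (hint i) (horlicz i) ht
            (htK i)
    _ = Real.exp (-t * x + t ^ 2 * (ε * ∑ i, K i ^ 2)) := by
        rw [← Real.exp_sum, ← Real.exp_add, mul_sum, mul_sum]
        congr 2
        exact sum_congr rfl fun i _ => by ring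

end

/-- Theorem 2.ε, two-case form: for independent mean-zero `Xᵢ` with
`E[exp(|Xᵢ|/Kᵢ) − 1 − |Xᵢ|/Kᵢ] ≤ ε`, with `B² = ε ∑ Kᵢ²` and `M = max Kᵢ`:
`P(Sₙ ≥ x) ≤ exp(−x²/(4B²))` for `0 ≤ x ≤ 2B²/M`, and
`P(Sₙ ≥ x) ≤ exp(−(x/M − B²/M²))` for `x ≥ 2B²/M`. -/
theorem tail_le_two_cases_eps {Ω : Type*} [MeasureSpace Ω]
    [IsProbabilityMeasure (ℙ : Measure Ω)]
    {ι : Type*} [Fintype ι] [Nonempty ι]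
    (ε : ℝ) (hε : 0 < ε)
    (X : ι → Ω → ℝ) (K : ι → ℝ)
    (hindep : iIndepFun X ℙ)
    (hXint : ∀ i, Integrable (X i)) (hmean : ∀ i, ∫ ω, X i ω = 0)
    (hK : ∀ i, 0 < K i)
    (hint : ∀ i, Integrable (fun ω => Real.exp (|X i ω| / K i)))
    (horlicz : ∀ i, ∫ ω, (Real.exp (|X i ω| / K i) - 1 - |X i ω| / K i) ≤ ε)
    (B M : ℝ) (hB : B ^ 2 = ε * ∑ i, K i ^ 2)
    (hM : M = Finset.univ.sup' Finset.univ_nonempty K) :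
    (∀ x : ℝ, 0 ≤ x → x ≤ 2 * B ^ 2 / M →
      (ℙ {ω | x ≤ ∑ i, X i ω}).toReal ≤ Real.exp (-(x ^ 2 / (4 * B ^ 2)))) ∧
    (∀ x : ℝ, 2 * B ^ 2 / M ≤ x →
      (ℙ {ω | x ≤ ∑ i, X i ω}).toReal ≤ Real.exp (-(x / M - B ^ 2 / M ^ 2))) := by
  have hKM : ∀ i, K i ≤ M := fun i => hM ▸ le_sup' K (mem_univ i)
  have hM₀ : 0 < M := (hK (Classical.arbitrary ι)).trans_le (hKM _)
  have hB₀ : 0 < B ^ 2 := hB ▸ mul_pos hε (sum_pos (fun i _ => pow_pos (hK i) 2) univ_nonempty)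
  have chernoff : ∀ x t : ℝ, 0 ≤ t → t * M ≤ 1 →
      (ℙ {ω | x ≤ ∑ i, X i ω}).toReal ≤ Real.exp (-t * x + t ^ 2 * B ^ 2) := fun x t ht htM =>
    hB ▸ measureReal_sum_ge_le_exp_of_integral_psi₁₁_le hindep hXint hmean hK hint horlicz x ht
      fun i => (mul_le_mul_of_nonneg_left (hKM i) ht).trans htM
  refine ⟨fun x hx₀ hx => ?_, fun x _ => ?_⟩
  · convert chernoff x (x / (2 * B ^ 2)) (by positivity) ?_ using 2
    · field_simp; ring
    · rw [le_div_iff₀ hM₀] at hx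
      rw [div_mul_eq_mul_div, div_le_one (by positivity)]
      exact hx
  · convert chernoff x (1 / M) (by positivity) (one_div_mul_cancel hM₀.ne').le using 2
    field_simp; ring
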